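/- arXiv:1111.4378 — 2 statements merged into one kernel-verified Lean document; each statement's English description precedes it below -/
import Mathlib

section
/- Discrete uniform Gronwall lemma: Given k > 0, positive integers n₁ < n*, with n₁ + n₂ + 1 ≤ n*, and positive sequences ξ_n, η_n, ζ_n satisfying ξ_n ≤ ξ_{n−1}(1 + k η_{n−1}) + k ζ_n for n = n₁, …, n*. Assume further that for any n' with n₁ ≤ n' ≤ n* − n₂ one has k Σ_{n=n'}^{n'+n₂} η_n ≤ a₁, k Σ_{n=n'}^{n'+n₂} ζ_n ≤ a₂, and k Σ_{n=n'}^{n'+n₂} ξ_n ≤ a₃. Then ξ_n ≤ (a₃/(k n₂) + a₂) e^{a₁} for any n with n₁ + n₂ + 1 ≤ n ≤ n*. -/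
open Finset

set_option maxHeartbeats 1600000 in
theorem discrete_uniform_gronwall (k : ℝ) (hk : 0 < k) (n₁ n₂ nstar : ℕ)
    (hn₁ : 0 < n₁) (hn₂ : 0 < n₂) (hnstar : 0 < nstar)
    (h₁ : n₁ < nstar) (h₂ : n₁ + n₂ + 1 ≤ nstar)
    (ξ η ζ : ℕ → ℝ) (hξ : ∀ n, 0 ≤ ξ n) (hη : ∀ n, 0 ≤ η n) (hζ : ∀ n, 0 ≤ ζ n)
    (hrec : ∀ n, n₁ ≤ n → n ≤ nstar → ξ n ≤ ξ (n - 1) * (1 + k * η (n - 1)) + k * ζ n)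
    (a₁ a₂ a₃ : ℝ)
    (hη' : ∀ n', n₁ ≤ n' → n' + n₂ ≤ nstar → k * ∑ n ∈ Finset.Icc n' (n' + n₂), η n ≤ a₁)
    (hζ' : ∀ n', n₁ ≤ n' → n' + n₂ ≤ nstar → k * ∑ n ∈ Finset.Icc n' (n' + n₂), ζ n ≤ a₂)
    (hξ' : ∀ n', n₁ ≤ n' → n' + n₂ ≤ nstar → k * ∑ n ∈ Finset.Icc n' (n' + n₂), ξ n ≤ a₃) :
    ∀ n, n₁ + n₂ + 1 ≤ n → n ≤ nstar →
      ξ n ≤ (a₃ / (k * n₂) + a₂) * Real.exp a₁ := by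
  intro n hn1 hn2
  -- window starting at n - n₂ - 1
  have hw1 : n₁ ≤ n - n₂ - 1 := by omega
  have hw2 : (n - n₂ - 1) + n₂ = n - 1 := by omega
  have hw3 : (n - n₂ - 1) + n₂ ≤ nstar := by omega
  -- existence of a good starting point n₀
  have hsum : k * ∑ m ∈ Finset.Icc (n - n₂ - 1) (n - 1), ξ m ≤ a₃ := by
    have := hξ' (n - n₂ - 1) hw1 hw3
    rwa [hw2] at this
  have hcard : (Finset.Icc (n - n₂ - 1) (n - 1)).card = n₂ + 1 := by
    rw [Nat.card_Icc]; omega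
  have hexist : ∃ n₀ ∈ Finset.Icc (n - n₂ - 1) (n - 1),
      ξ n₀ ≤ a₃ / (k * (n₂ + 1)) := by
    by_contra hcon
    push_neg at hcon
    have hlt : ∀ m ∈ Finset.Icc (n - n₂ - 1) (n - 1),
        a₃ / (k * (n₂ + 1)) < ξ m := hcon
    have hne : (Finset.Icc (n - n₂ - 1) (n - 1)).Nonempty := by
      rw [← Finset.card_pos, hcard]; omega
    have hsum2 : ∑ m ∈ Finset.Icc (n - n₂ - 1) (n - 1),
        (a₃ / (k * (n₂ + 1))) < ∑ m ∈ Finset.Icc (n - n₂ - 1) (n - 1), ξ m :=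
      Finset.sum_lt_sum_of_nonempty hne hlt
    rw [Finset.sum_const, hcard, nsmul_eq_mul] at hsum2
    have hkpos : (0:ℝ) < k * (n₂ + 1) := by positivity
    have : (↑(n₂ + 1) : ℝ) * (a₃ / (k * (n₂ + 1))) = a₃ / k := by
      push_cast
      field_simp
    rw [this] at hsum2
    have : a₃ / k < a₃ / k := lt_of_lt_of_le hsum2 (by
      rw [le_div_iff₀ hk] at *
      linarith [hsum])
    exact lt_irrefl _ this
  obtain ⟨n₀, hn₀mem, hn₀le⟩ := hexist
  rw [Finset.mem_Icc] at hn₀mem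
  obtain ⟨hn₀l, hn₀r⟩ := hn₀mem
  have hn₀n : n₀ ≤ n := by omega
  have hn₀n₁ : n₁ ≤ n₀ := by omega
  -- key induction
  have key : ∀ d, n₀ + d ≤ n →
      ξ (n₀ + d) ≤ (ξ n₀ + k * ∑ j ∈ Finset.Icc (n₀ + 1) (n₀ + d), ζ j) *
        Real.exp (k * ∑ j ∈ Finset.Ico n₀ (n₀ + d), η j) := by
    intro d
    induction d with
    | zero => simp
    | succ d ih =>
      intro hd
      have hd' : n₀ + d ≤ n := by omega
      have IH := ih hd'
      set m := n₀ + d with hm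
      have hrec' : ξ (m + 1) ≤ ξ m * (1 + k * η m) + k * ζ (m + 1) := by
        have := hrec (m + 1) (by omega) (by omega)
        simpa using this
      have hsζ : ∑ j ∈ Finset.Icc (n₀ + 1) (m + 1), ζ j
          = ∑ j ∈ Finset.Icc (n₀ + 1) m, ζ j + ζ (m + 1) :=
        Finset.sum_Icc_succ_top (by omega) _
      have hsη : ∑ j ∈ Finset.Ico n₀ (m + 1), η j
          = ∑ j ∈ Finset.Ico n₀ m, η j + η m :=
        Finset.sum_Ico_succ_top (by omega) _
      set A := ξ n₀ + k * ∑ j ∈ Finset.Icc (n₀ + 1) m, ζ j with hA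
      set S := k * ∑ j ∈ Finset.Ico n₀ m, η j with hS
      have hAnn : 0 ≤ A := by
        have h0 : 0 ≤ ∑ j ∈ Finset.Icc (n₀ + 1) m, ζ j :=
          Finset.sum_nonneg fun j _ => hζ j
        exact add_nonneg (hξ n₀) (mul_nonneg hk.le h0)
      have hSnn : 0 ≤ S :=
        mul_nonneg hk.le (Finset.sum_nonneg fun j _ => hη j)
      have hE1 : (1:ℝ) ≤ Real.exp S := Real.one_le_exp hSnn
      have he1 : (1:ℝ) ≤ Real.exp (k * η m) := Real.one_le_exp (mul_nonneg hk.le (hη m))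
      have h1pk : 1 + k * η m ≤ Real.exp (k * η m) := by
        have := Real.add_one_le_exp (k * η m)
        linarith
      show ξ (m + 1) ≤ (ξ n₀ + k * ∑ j ∈ Finset.Icc (n₀ + 1) (m + 1), ζ j) *
          Real.exp (k * ∑ j ∈ Finset.Ico n₀ (m + 1), η j)
      rw [hsζ, hsη]
      have hrhs : (ξ n₀ + k * (∑ j ∈ Finset.Icc (n₀ + 1) m, ζ j + ζ (m + 1))) *
          Real.exp (k * (∑ j ∈ Finset.Ico n₀ m, η j + η m))
          = (A + k * ζ (m + 1)) * (Real.exp S * Real.exp (k * η m)) := by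
        rw [← Real.exp_add, hA, hS]; ring_nf
      rw [hrhs]
      have step1 : ξ m * (1 + k * η m) ≤ (A * Real.exp S) * Real.exp (k * η m) := by
        have h0 : 0 ≤ 1 + k * η m := by
          have := mul_nonneg hk.le (hη m); linarith
        exact mul_le_mul IH h1pk h0 (mul_nonneg hAnn (Real.exp_pos S).le)
      have step2 : k * ζ (m + 1) ≤ k * ζ (m + 1) * (Real.exp S * Real.exp (k * η m)) := by
        apply le_mul_of_one_le_right (mul_nonneg hk.le (hζ (m+1)))
        nlinarith [Real.exp_pos S, Real.exp_pos (k * η m)]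
      calc ξ (m + 1) ≤ ξ m * (1 + k * η m) + k * ζ (m + 1) := hrec'
        _ ≤ (A * Real.exp S) * Real.exp (k * η m) + k * ζ (m + 1) * (Real.exp S * Real.exp (k * η m)) := by
            linarith
        _ = (A + k * ζ (m + 1)) * (Real.exp S * Real.exp (k * η m)) := by ring
  have hkey := key (n - n₀) (by omega)
  have hrw : n₀ + (n - n₀) = n := by omega
  rw [hrw] at hkey
  -- bound the ζ sum
  have hζw1 : n₁ ≤ n - n₂ := by omega
  have hζw2 : (n - n₂) + n₂ = n := by omega
  have hζbd : k * ∑ j ∈ Finset.Icc (n₀ + 1) n, ζ j ≤ a₂ := by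
    have hsub : Finset.Icc (n₀ + 1) n ⊆ Finset.Icc (n - n₂) n := by
      intro x hx
      rw [Finset.mem_Icc] at *
      omega
    have hle : ∑ j ∈ Finset.Icc (n₀ + 1) n, ζ j ≤ ∑ j ∈ Finset.Icc (n - n₂) n, ζ j :=
      Finset.sum_le_sum_of_subset_of_nonneg hsub (fun j _ _ => hζ j)
    have := hζ' (n - n₂) hζw1 (by omega)
    rw [hζw2] at this
    have := mul_le_mul_of_nonneg_left hle hk.le
    linarith
  -- bound the η sum
  have hηbd : k * ∑ j ∈ Finset.Ico n₀ n, η j ≤ a₁ := by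
    have hsub : Finset.Ico n₀ n ⊆ Finset.Icc (n - n₂ - 1) (n - 1) := by
      intro x hx
      rw [Finset.mem_Ico] at hx
      rw [Finset.mem_Icc]
      omega
    have hle : ∑ j ∈ Finset.Ico n₀ n, η j ≤ ∑ j ∈ Finset.Icc (n - n₂ - 1) (n - 1), η j :=
      Finset.sum_le_sum_of_subset_of_nonneg hsub (fun j _ _ => hη j)
    have := hη' (n - n₂ - 1) hw1 hw3
    rw [hw2] at this
    have := mul_le_mul_of_nonneg_left hle hk.le
    linarith
  -- a₃ ≥ 0 and a₂ ≥ 0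
  have ha₃ : 0 ≤ a₃ := by
    have h := hξ' n₁ le_rfl (by omega)
    have : 0 ≤ k * ∑ m ∈ Finset.Icc n₁ (n₁ + n₂), ξ m :=
      mul_nonneg hk.le (Finset.sum_nonneg fun j _ => hξ j)
    linarith
  have ha₂ : 0 ≤ a₂ := by
    have h := hζ' n₁ le_rfl (by omega)
    have : 0 ≤ k * ∑ m ∈ Finset.Icc n₁ (n₁ + n₂), ζ m :=
      mul_nonneg hk.le (Finset.sum_nonneg fun j _ => hζ j)
    linarith
  -- ξ n₀ ≤ a₃ / (k * n₂)
  have hξn₀ : ξ n₀ ≤ a₃ / (k * n₂) := by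
    have hn₂R : (0:ℝ) < (n₂:ℝ) := by exact_mod_cast hn₂
    refine hn₀le.trans (div_le_div_of_nonneg_left ha₃ (mul_pos hk hn₂R) ?_)
    have h : ((n₂:ℝ)) ≤ ((n₂:ℝ) + 1) := by linarith
    exact mul_le_mul_of_nonneg_left h hk.le
  -- conclude
  refine hkey.trans ?_
  have h1 : ξ n₀ + k * ∑ j ∈ Finset.Icc (n₀ + 1) n, ζ j ≤ a₃ / (k * n₂) + a₂ := by
    linarith
  have h2 : Real.exp (k * ∑ j ∈ Finset.Ico n₀ n, η j) ≤ Real.exp a₁ :=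
    Real.exp_le_exp.mpr hηbd
  have hnn : (0:ℝ) ≤ a₃ / (k * n₂) + a₂ := by positivity
  exact mul_le_mul h1 h2 (Real.exp_pos _).le hnn
end

section
/- Variant discrete uniform Gronwall lemma with implicit factor: Given k > 0, positive integers n₀, n₁, and positive sequences ξ_n, η_n, ζ_n with k η_n < 1/2 for all n ≥ n₀ and (1 − k η_n) ξ_n ≤ ξ_{n−1} + k ζ_n for n ≥ n₀. Assume that for any k₀ ≥ n₀, k Σ_{n=k₀}^{k₀+n₁} η_n ≤ a₁, k Σ_{n=k₀}^{k₀+n₁} ζ_n ≤ a₂, and k Σ_{n=k₀}^{k₀+n₁} ξ_n ≤ a₃. Then ξ_n ≤ (a₃/(k n₁) + a₂) e^{4 a₁} for any n ≥ n₀ + n₁. -/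
open Finset

lemma my_inv_le_exp (x : ℝ) (hx0 : 0 ≤ x) (hx : x < 1/2) :
    1 / (1 - x) ≤ Real.exp (4 * x) := by
  have h1 : (0:ℝ) < 1 - x := by linarith
  have h2 : 1 + 4*x ≤ Real.exp (4*x) := by
    have := Real.add_one_le_exp (4*x); linarith
  rw [div_le_iff₀ h1]
  nlinarith [Real.exp_pos (4*x)]

theorem discrete_uniform_gronwall_variant (k : ℝ) (hk : 0 < k) (n₀ n₁ : ℕ)
    (hn₀ : 0 < n₀) (hn₁ : 0 < n₁)
    (ξ η ζ : ℕ → ℝ) (hξ : ∀ n, 0 ≤ ξ n) (hη : ∀ n, 0 ≤ η n) (hζ : ∀ n, 0 ≤ ζ n)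
    (hsmall : ∀ n, n₀ ≤ n → k * η n < 1 / 2)
    (hrec : ∀ n, n₀ ≤ n → (1 - k * η n) * ξ n ≤ ξ (n - 1) + k * ζ n)
    (a₁ a₂ a₃ : ℝ)
    (hη' : ∀ k₀, n₀ ≤ k₀ → k * ∑ n ∈ Finset.Icc k₀ (k₀ + n₁), η n ≤ a₁)
    (hζ' : ∀ k₀, n₀ ≤ k₀ → k * ∑ n ∈ Finset.Icc k₀ (k₀ + n₁), ζ n ≤ a₂)
    (hξ' : ∀ k₀, n₀ ≤ k₀ → k * ∑ n ∈ Finset.Icc k₀ (k₀ + n₁), ξ n ≤ a₃) :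
    ∀ n, n₀ + n₁ ≤ n → ξ n ≤ (a₃ / (k * n₁) + a₂) * Real.exp (4 * a₁) := by
  intro n hn
  set k₀ := n - n₁ with hk₀def
  have hk₀ : n₀ ≤ k₀ := Nat.le_sub_of_add_le hn
  have hneq : n = k₀ + n₁ := by omega
  -- find m in [k₀, k₀+n₁-1] with ξ m ≤ a₃/(k*n₁)
  have hsub : Finset.Icc k₀ (k₀ + n₁ - 1) ⊆ Finset.Icc k₀ (k₀ + n₁) := by
    apply Finset.Icc_subset_Icc_right; omega
  have hsumξ : ∑ j ∈ Finset.Icc k₀ (k₀ + n₁ - 1), ξ j ≤ a₃ / k := by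
    rw [le_div_iff₀ hk] at *
    calc (∑ j ∈ Finset.Icc k₀ (k₀ + n₁ - 1), ξ j) * k
        ≤ (∑ j ∈ Finset.Icc k₀ (k₀ + n₁), ξ j) * k := by
          apply mul_le_mul_of_nonneg_right _ hk.le
          exact Finset.sum_le_sum_of_subset_of_nonneg hsub (fun i _ _ => hξ i)
      _ ≤ a₃ := by rw [mul_comm]; exact hξ' k₀ hk₀
  have hcard : (Finset.Icc k₀ (k₀ + n₁ - 1)).card = n₁ := by
    rw [Nat.card_Icc]; omega
  have hex : ∃ m ∈ Finset.Icc k₀ (k₀ + n₁ - 1), ξ m ≤ a₃ / (k * n₁) := by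
    by_contra hcon
    push_neg at hcon
    have hlt : ∑ j ∈ Finset.Icc k₀ (k₀ + n₁ - 1), (a₃ / (k * n₁))
        < ∑ j ∈ Finset.Icc k₀ (k₀ + n₁ - 1), ξ j := by
      apply Finset.sum_lt_sum_of_nonempty
      · rw [← Finset.card_pos, hcard]; exact hn₁
      · exact hcon
    rw [Finset.sum_const, hcard] at hlt
    have hn₁' : (0:ℝ) < (n₁:ℝ) := by exact_mod_cast hn₁
    have : (n₁:ℝ) * (a₃ / (k * n₁)) = a₃ / k := by
      field_simp
    rw [nsmul_eq_mul, this] at hlt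
    linarith
  obtain ⟨m, hmmem, hmle⟩ := hex
  rw [Finset.mem_Icc] at hmmem
  have hmn₀ : n₀ ≤ m := le_trans hk₀ hmmem.1
  have hmn : m ≤ n := by omega
  -- main induction
  have key : ∀ p, m ≤ p → p ≤ n →
      ξ p ≤ (ξ m + k * ∑ j ∈ Finset.Icc (m+1) p, ζ j) *
        Real.exp (4 * (k * ∑ j ∈ Finset.Icc (m+1) p, η j)) := by
    intro p hp
    induction p, hp using Nat.le_induction with
    | base =>
      intro _
      rw [Finset.Icc_eq_empty (by omega), Finset.sum_empty, Finset.sum_empty]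
      simp
    | succ p hp ih =>
      intro hpn
      have ih' := ih (by omega)
      have hpn₀ : n₀ ≤ p + 1 := by omega
      have hrec' := hrec (p+1) hpn₀
      simp only [Nat.add_sub_cancel] at hrec'
      have hsm := hsmall (p+1) hpn₀
      have hpos : (0:ℝ) < 1 - k * η (p+1) := by linarith
      have hstep : ξ (p+1) ≤ (ξ p + k * ζ (p+1)) * Real.exp (4 * (k * η (p+1))) := by
        have h1 : ξ (p+1) ≤ (ξ p + k * ζ (p+1)) / (1 - k * η (p+1)) := by
          rw [le_div_iff₀ hpos, mul_comm]; exact hrec'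
        have h2 : (ξ p + k * ζ (p+1)) / (1 - k * η (p+1))
            ≤ (ξ p + k * ζ (p+1)) * Real.exp (4 * (k * η (p+1))) := by
          rw [div_eq_mul_one_div]
          apply mul_le_mul_of_nonneg_left _ (by have := hξ p; have := hζ (p+1); positivity)
          exact my_inv_le_exp _ (mul_nonneg hk.le (hη _)) hsm
        linarith
      rw [Finset.sum_Icc_succ_top (by omega), Finset.sum_Icc_succ_top (by omega)]
      set Sζ := ∑ j ∈ Finset.Icc (m+1) p, ζ j with hSζ
      set Sη := ∑ j ∈ Finset.Icc (m+1) p, η j with hSη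
      have hSζ0 : 0 ≤ Sζ := Finset.sum_nonneg (fun i _ => hζ i)
      have hSη0 : 0 ≤ Sη := Finset.sum_nonneg (fun i _ => hη i)
      have hexp1 : (1:ℝ) ≤ Real.exp (4 * (k * Sη)) := by
        rw [Real.one_le_exp_iff]
        exact mul_nonneg (by norm_num) (mul_nonneg hk.le hSη0)
      have hexp2 : Real.exp (4 * (k * (Sη + η (p+1))))
          = Real.exp (4 * (k * Sη)) * Real.exp (4 * (k * η (p+1))) := by
        rw [← Real.exp_add]; ring_nf
      calc ξ (p+1) ≤ (ξ p + k * ζ (p+1)) * Real.exp (4 * (k * η (p+1))) := hstep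
        _ ≤ ((ξ m + k * Sζ) * Real.exp (4 * (k * Sη)) + k * ζ (p+1)) *
              Real.exp (4 * (k * η (p+1))) := by
            apply mul_le_mul_of_nonneg_right _ (Real.exp_pos _).le
            linarith
        _ ≤ ((ξ m + k * (Sζ + ζ (p+1))) * Real.exp (4 * (k * Sη))) *
              Real.exp (4 * (k * η (p+1))) := by
            apply mul_le_mul_of_nonneg_right _ (Real.exp_pos _).le
            have hkζ : 0 ≤ k * ζ (p+1) := mul_nonneg hk.le (hζ _)
            nlinarith [hξ m, Real.exp_pos (4 * (k * Sη))]
        _ = (ξ m + k * (Sζ + ζ (p+1))) * Real.exp (4 * (k * (Sη + η (p+1)))) := by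
            rw [hexp2]; ring
  have hmain := key n hmn le_rfl
  -- bound the sums
  have hsub2 : Finset.Icc (m+1) n ⊆ Finset.Icc k₀ (k₀ + n₁) := by
    apply Finset.Icc_subset_Icc <;> omega
  have hζb : k * ∑ j ∈ Finset.Icc (m+1) n, ζ j ≤ a₂ := by
    calc k * ∑ j ∈ Finset.Icc (m+1) n, ζ j
        ≤ k * ∑ j ∈ Finset.Icc k₀ (k₀ + n₁), ζ j := by
          apply mul_le_mul_of_nonneg_left _ hk.le
          exact Finset.sum_le_sum_of_subset_of_nonneg hsub2 (fun i _ _ => hζ i)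
      _ ≤ a₂ := hζ' k₀ hk₀
  have hηb : k * ∑ j ∈ Finset.Icc (m+1) n, η j ≤ a₁ := by
    calc k * ∑ j ∈ Finset.Icc (m+1) n, η j
        ≤ k * ∑ j ∈ Finset.Icc k₀ (k₀ + n₁), η j := by
          apply mul_le_mul_of_nonneg_left _ hk.le
          exact Finset.sum_le_sum_of_subset_of_nonneg hsub2 (fun i _ _ => hη i)
      _ ≤ a₁ := hη' k₀ hk₀
  have hSζ0 : 0 ≤ ∑ j ∈ Finset.Icc (m+1) n, ζ j := Finset.sum_nonneg (fun i _ => hζ i)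
  calc ξ n ≤ (ξ m + k * ∑ j ∈ Finset.Icc (m+1) n, ζ j) *
        Real.exp (4 * (k * ∑ j ∈ Finset.Icc (m+1) n, η j)) := hmain
    _ ≤ (a₃ / (k * n₁) + a₂) * Real.exp (4 * a₁) := by
        apply mul_le_mul
        · linarith
        · apply Real.exp_le_exp.mpr; linarith
        · exact (Real.exp_pos _).le
        · have ha₂ : 0 ≤ a₂ := le_trans (mul_nonneg hk.le
            (Finset.sum_nonneg (fun i _ => hζ i))) (hζ' n₀ le_rfl)
          have ha₃ : 0 ≤ a₃ := le_trans (mul_nonneg hk.le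
            (Finset.sum_nonneg (fun i _ => hξ i))) (hξ' n₀ le_rfl)
          have : 0 ≤ a₃ / (k * (n₁:ℝ)) := div_nonneg ha₃ (by positivity)
          linarith
end
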